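/- The placement map p(s,ζ₁,ζ₂) = r(s) + ζ₁u(s) + ζ₂v(s) is differentiable at almost every point of the interior of Ω, and at such points its Jacobian determinant equals det Dp(s,ζ₁,ζ₂) = 1 − ζ₁k′(s) − ζ₂k″(s). -/

import Mathlib

open MeasureTheory Set Filter Topology
open scoped ENNReal

noncomputable section

/-- Euclidean 3-space. -/
abbrev E3 : Type := EuclideanSpace ℝ (Fin 3)

/-- The cross product on `E3`. -/
def cross3 (a b : E3) : E3 :=
  WithLp.toLp 2 ![a 1 * b 2 - a 2 * b 1, a 2 * b 0 - a 0 * b 2, a 0 * b 1 - a 1 * b 0]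

/-- `(u, v, w, r)` is an (absolutely continuous) solution on `[0, L]` of the rod frame
system with flexural densities `k₁, k₂`, twist density `ω` and initial data
`(rhat, uhat, vhat, what)`:  the initial conditions hold, the candidate a.e. derivatives are
(interval) integrable, and each unknown is the indefinite integral of its a.e.
derivative (this is exactly absolute continuity together with the validity of the
differential system almost everywhere). -/
def RodSolution (L : ℝ) (k₁ k₂ ω : ℝ → ℝ) (rhat uhat vhat what : E3)
    (u v w r : ℝ → E3) : Prop :=
  u 0 = uhat ∧ v 0 = vhat ∧ w 0 = what ∧ r 0 = rhat ∧
  IntervalIntegrable (fun s => ω s • v s - k₁ s • w s) volume 0 L ∧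
  IntervalIntegrable (fun s => -(ω s) • u s - k₂ s • w s) volume 0 L ∧
  IntervalIntegrable (fun s => k₁ s • u s + k₂ s • v s) volume 0 L ∧
  IntervalIntegrable w volume 0 L ∧
  ∀ s ∈ Icc (0:ℝ) L,
    u s = uhat + ∫ t in (0:ℝ)..s, (ω t • v t - k₁ t • w t) ∧
    v s = vhat + ∫ t in (0:ℝ)..s, (-(ω t) • u t - k₂ t • w t) ∧
    w s = what + ∫ t in (0:ℝ)..s, (k₁ t • u t + k₂ t • v t) ∧
    r s = rhat + ∫ t in (0:ℝ)..s, w t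

/-- The placement map `p(s, ζ₁, ζ₂) = r(s) + ζ₁ u(s) + ζ₂ v(s)`, viewed as a map of
`ℝ³` into itself (the first coordinate is the arc-length parameter `s`). -/
def placement (r u v : ℝ → E3) (x : E3) : E3 :=
  r (x 0) + (x 1) • u (x 0) + (x 2) • v (x 0)

/-! At `x = (s, ζ₁, ζ₂)` the columns of `Dp` are `w + ζ₁ u' + ζ₂ v'`, `u` and `v`.
Since `u' = ω v - k′ w` and `v' = -ω u - k″ w`, multilinearity and alternation of the
determinant give `det Dp = (1 - ζ₁ k′ - ζ₂ k″) [w, u, v]`. The triple product `[w, u, v]` is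
absolutely continuous and its a.e. derivative `[w', u, v] + [w, u', v] + [w, u, v']` vanishes,
because each of `w'`, `u'`, `v'` is a combination of the two other frame vectors. Hence
`[w, u, v]` keeps its initial value `[û × v̂, û, v̂] = |û|² |v̂|² - (û · v̂)² = 1`. -/

def tripleProduct (a b c : E3) : ℝ :=
  (EuclideanSpace.basisFun (Fin 3) ℝ).toBasis.det ![a, b, c]

lemma tripleProduct_apply (a b c : E3) :
    tripleProduct a b c = a 0 * b 1 * c 2 - a 0 * b 2 * c 1 - a 1 * b 0 * c 2
      + a 1 * b 2 * c 0 + a 2 * b 0 * c 1 - a 2 * b 1 * c 0 := by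
  simp only [tripleProduct, Module.Basis.det_apply, Matrix.det_fin_three,
    Module.Basis.toMatrix_apply, OrthonormalBasis.coe_toBasis_repr_apply,
    EuclideanSpace.basisFun_repr, Matrix.cons_val_zero, Matrix.cons_val_one, Matrix.cons_val]
  ring

lemma tripleProduct_cross3 (a b : E3) :
    tripleProduct (cross3 a b) a b = ‖a‖ ^ 2 * ‖b‖ ^ 2 - inner ℝ a b ^ 2 := by
  simp only [tripleProduct_apply, cross3, EuclideanSpace.norm_sq_eq, PiLp.inner_apply,
    Fin.sum_univ_three, Matrix.cons_val_zero, Matrix.cons_val_one, Matrix.cons_val,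
    Real.norm_eq_abs, sq_abs, RCLike.inner_apply, Real.ringHom_apply]
  ring

lemma HasDerivAt.tripleProduct {a b c : ℝ → E3} {a' b' c' : E3} {s : ℝ}
    (ha : HasDerivAt a a' s) (hb : HasDerivAt b b' s) (hc : HasDerivAt c c' s) :
    HasDerivAt (fun t => tripleProduct (a t) (b t) (c t))
      (tripleProduct a' (b s) (c s) + tripleProduct (a s) b' (c s)
        + tripleProduct (a s) (b s) c') s := by
  have coord {f : ℝ → E3} {f' : E3} (hf : HasDerivAt f f' s) (i : Fin 3) :
      HasDerivAt (fun t => f t i) (f' i) s :=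
    (EuclideanSpace.proj i : E3 →L[ℝ] ℝ).hasFDerivAt.comp_hasDerivAt s hf
  have m (i j k : Fin 3) := ((coord ha i).mul (coord hb j)).mul (coord hc k)
  have key := ((((m 0 1 2).sub (m 0 2 1)).sub (m 1 0 2)).add (m 1 2 0)).add (m 2 0 1) |>.sub
    (m 2 1 0)
  simp only [tripleProduct_apply]
  exact key.congr_deriv (by simp only [Pi.mul_apply]; ring)

lemma AbsolutelyContinuousOnInterval.tripleProduct {a b c : ℝ → E3} {x y : ℝ}
    (ha : ∀ i, AbsolutelyContinuousOnInterval (fun t => a t i) x y)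
    (hb : ∀ i, AbsolutelyContinuousOnInterval (fun t => b t i) x y)
    (hc : ∀ i, AbsolutelyContinuousOnInterval (fun t => c t i) x y) :
    AbsolutelyContinuousOnInterval (fun t => tripleProduct (a t) (b t) (c t)) x y := by
  have m (i j k : Fin 3) := ((ha i).fun_mul (hb j)).fun_mul (hc k)
  simp only [tripleProduct_apply]
  exact ((((m 0 1 2).fun_sub (m 0 2 1)).fun_sub (m 1 0 2)).fun_add (m 1 2 0)).fun_add
    (m 2 0 1) |>.fun_sub (m 2 1 0)

lemma AbsolutelyContinuousOnInterval.congr {X : Type*} [PseudoMetricSpace X] {f g : ℝ → X}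
    {a b : ℝ} (hf : AbsolutelyContinuousOnInterval f a b) (hfg : EqOn f g (uIcc a b)) :
    AbsolutelyContinuousOnInterval g a b := by
  refine Tendsto.congr' (eventually_inf_principal.2 (Eventually.of_forall fun E hE => ?_)) hf
  exact Finset.sum_congr rfl fun i hi => by rw [hfg (hE.1 i hi).1, hfg (hE.1 i hi).2]

section IndefiniteIntegral

variable {E : Type*} [NormedAddCommGroup E] [NormedSpace ℝ E] [CompleteSpace E]
  {F f : ℝ → E} {a b : ℝ}

lemma ae_hasDerivAt_of_eq_add_integral (hf : IntervalIntegrable f volume a b)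
    (hF : ∀ s ∈ Icc a b, F s = F a + ∫ t in a..s, f t) :
    ∀ᵐ s, s ∈ Icc a b → HasDerivAt F (f s) s := by
  filter_upwards [hf.ae_hasDerivAt_integral,
    eventuallyEq_set.1 (Ioo_ae_eq_Icc (a := a) (b := b))] with s hderiv hIoo hs
  have hab : a ≤ b := hs.1.trans hs.2
  rw [uIcc_of_le hab] at hderiv
  refine ((hderiv hs a ⟨le_rfl, hab⟩).const_add (F a)).congr_of_eventuallyEq ?_
  filter_upwards [isOpen_Ioo.mem_nhds (hIoo.2 hs)] with t ht using hF t (Ioo_subset_Icc_self ht)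

lemma ContinuousLinearMap.absolutelyContinuousOnInterval_comp_of_eq_add_integral
    (T : E →L[ℝ] ℝ) (hab : a ≤ b) (hf : IntervalIntegrable f volume a b)
    (hF : ∀ s ∈ Icc a b, F s = F a + ∫ t in a..s, f t) :
    AbsolutelyContinuousOnInterval (fun s => T (F s)) a b := by
  have hTf : IntervalIntegrable (fun t => T (f t)) volume a b :=
    ⟨T.integrable_comp hf.1, T.integrable_comp hf.2⟩
  have hconst : AbsolutelyContinuousOnInterval (fun _ => T (F a)) a b :=
    (LipschitzWith.const _).lipschitzOnWith.absolutelyContinuousOnInterval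
  have hprim := hconst.fun_add (hTf.absolutelyContinuousOnInterval_intervalIntegral left_mem_uIcc)
  refine hprim.congr fun s hs => ?_
  rw [uIcc_of_le hab] at hs
  dsimp only
  rw [hF s hs, map_add, T.intervalIntegral_comp_comm
    (hf.mono_set (uIcc_subset_uIcc left_mem_uIcc (by rwa [uIcc_of_le hab])))]

end IndefiniteIntegral

lemma EuclideanSpace.quasiMeasurePreserving_apply {ι : Type*} [Fintype ι] (i : ι) :
    Measure.QuasiMeasurePreserving (fun x : EuclideanSpace ℝ ι => x i) volume volume :=
  (Measure.quasiMeasurePreserving_eval (fun _ : ι => (volume : Measure ℝ)) i).comp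
    (PiLp.volume_preserving_ofLp ι).quasiMeasurePreserving

def columnsCLM (a b c : E3) : E3 →L[ℝ] E3 :=
  (EuclideanSpace.proj 0 : E3 →L[ℝ] ℝ).smulRight a +
    (EuclideanSpace.proj 1 : E3 →L[ℝ] ℝ).smulRight b +
    (EuclideanSpace.proj 2 : E3 →L[ℝ] ℝ).smulRight c

lemma det_columnsCLM (a b c : E3) :
    LinearMap.det (columnsCLM a b c : E3 →ₗ[ℝ] E3) = tripleProduct a b c := by
  set e := (EuclideanSpace.basisFun (Fin 3) ℝ).toBasis
  have hcols : (columnsCLM a b c : E3 →ₗ[ℝ] E3) ∘ e = ![a, b, c] := by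
    ext i : 1
    fin_cases i <;> simp [columnsCLM, e]
  rw [tripleProduct, ← hcols, e.det_comp, e.det_self, mul_one]

lemma hasFDerivAt_placement {r u v : ℝ → E3} {r' u' v' : E3} {x : E3}
    (hr : HasDerivAt r r' (x 0)) (hu : HasDerivAt u u' (x 0)) (hv : HasDerivAt v v' (x 0)) :
    HasFDerivAt (placement r u v) (columnsCLM (r' + x 1 • u' + x 2 • v') (u (x 0)) (v (x 0)))
      x := by
  have coord (i : Fin 3) :
      HasFDerivAt (fun y : E3 => y i) (EuclideanSpace.proj i : E3 →L[ℝ] ℝ) x :=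
    (EuclideanSpace.proj i : E3 →L[ℝ] ℝ).hasFDerivAt
  have key := ((hr.hasFDerivAt.comp x (coord 0)).add
    ((coord 1).smul (hu.hasFDerivAt.comp x (coord 0)))).add
    ((coord 2).smul (hv.hasFDerivAt.comp x (coord 0)))
  refine key.congr_fderiv ?_
  ext y : 1
  simp only [columnsCLM, Function.comp_apply, add_apply,
    ContinuousLinearMap.comp_apply, smul_apply,
    ContinuousLinearMap.smulRight_apply, ContinuousLinearMap.toSpanSingleton_apply,
    PiLp.proj_apply, smul_add]
  module

namespace RodSolution

variable {L : ℝ} {k₁ k₂ ω : ℝ → ℝ} {rhat uhat vhat what : E3} {u v w r : ℝ → E3}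

lemma ae_hasDerivAt (hsol : RodSolution L k₁ k₂ ω rhat uhat vhat what u v w r) :
    ∀ᵐ s, s ∈ Icc 0 L →
      HasDerivAt u (ω s • v s - k₁ s • w s) s ∧
      HasDerivAt v (-(ω s) • u s - k₂ s • w s) s ∧
      HasDerivAt w (k₁ s • u s + k₂ s • v s) s ∧ HasDerivAt r (w s) s := by
  obtain ⟨rfl, rfl, rfl, rfl, hiu, hiv, hiw, hir, hrep⟩ := hsol
  filter_upwards [ae_hasDerivAt_of_eq_add_integral hiu fun s hs => (hrep s hs).1,
    ae_hasDerivAt_of_eq_add_integral hiv fun s hs => (hrep s hs).2.1,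
    ae_hasDerivAt_of_eq_add_integral hiw fun s hs => (hrep s hs).2.2.1,
    ae_hasDerivAt_of_eq_add_integral hir fun s hs => (hrep s hs).2.2.2] with s hu hv hw hr hs
  exact ⟨hu hs, hv hs, hw hs, hr hs⟩

lemma tripleProduct_eq (hsol : RodSolution L k₁ k₂ ω rhat uhat vhat what u v w r) :
    ∀ s ∈ Icc 0 L, tripleProduct (w s) (u s) (v s) = tripleProduct what uhat vhat := by
  intro s hs
  have hL : 0 ≤ L := hs.1.trans hs.2
  have hderiv := hsol.ae_hasDerivAt
  obtain ⟨rfl, rfl, rfl, -, hiu, hiv, hiw, -, hrep⟩ := hsol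
  have hac {F f : ℝ → E3} (hf : IntervalIntegrable f volume 0 L)
      (hF : ∀ s ∈ Icc 0 L, F s = F 0 + ∫ t in 0..s, f t) (i : Fin 3) :
      AbsolutelyContinuousOnInterval (fun t => F t i) 0 L :=
    (EuclideanSpace.proj i : E3 →L[ℝ] ℝ).absolutelyContinuousOnInterval_comp_of_eq_add_integral
      hL hf hF
  obtain ⟨C, hC⟩ := AbsolutelyContinuousOnInterval.tripleProduct
    (hac hiw fun s hs => (hrep s hs).2.2.1) (hac hiu fun s hs => (hrep s hs).1)
    (hac hiv fun s hs => (hrep s hs).2.1) |>.const_of_ae_hasDerivAt_zero (by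
      filter_upwards [hderiv] with t ht htL
      rw [uIcc_of_le hL] at htL
      obtain ⟨hu, hv, hw, -⟩ := ht htL
      refine (hw.tripleProduct hu hv).congr_deriv ?_
      simp only [tripleProduct_apply, PiLp.add_apply, PiLp.sub_apply, PiLp.smul_apply,
        smul_eq_mul]
      ring)
  rw [uIcc_of_le hL] at hC
  rw [hC s hs, hC 0 ⟨le_rfl, hL⟩]

end RodSolution

theorem placement_jacobian_det_general
    (L : ℝ)
    (k₁ k₂ ω : ℝ → ℝ)
    (rhat uhat vhat what : E3)
    (huhat : ‖uhat‖ = 1) (hvhat : ‖vhat‖ = 1) (huv : (inner ℝ uhat vhat : ℝ) = 0)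
    (hwhat : what = cross3 uhat vhat)
    (u v w r : ℝ → E3)
    (hsol : RodSolution L k₁ k₂ ω rhat uhat vhat what u v w r)
    -- the cross-sections and the reference configuration Ω
    (A : ℝ → Set (ℝ × ℝ)) (Ω : Set E3)
    (hΩ : Ω = {x : E3 | x 0 ∈ Icc (0:ℝ) L ∧ (x 1, x 2) ∈ A (x 0)}) :
    ∀ᵐ x ∂(volume.restrict (interior Ω)),
      ∃ Df : E3 →L[ℝ] E3,
        HasFDerivAt (placement r u v) Df x ∧
        LinearMap.det (Df : E3 →ₗ[ℝ] E3) = 1 - (x 1) * k₁ (x 0) - (x 2) * k₂ (x 0) := by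
  have hframe : ∀ s ∈ Icc 0 L, tripleProduct (w s) (u s) (v s) = 1 := fun s hs => by
    rw [hsol.tripleProduct_eq s hs, hwhat, tripleProduct_cross3, huhat, hvhat, huv]
    norm_num
  filter_upwards [ae_restrict_mem isOpen_interior.measurableSet, ae_restrict_of_ae
    ((EuclideanSpace.quasiMeasurePreserving_apply 0).ae hsol.ae_hasDerivAt)] with x hx hderiv
  have hxL : x 0 ∈ Icc 0 L := by
    subst hΩ
    exact (interior_subset hx).1
  obtain ⟨hu, hv, -, hr⟩ := hderiv hxL
  refine ⟨_, hasFDerivAt_placement hr hu hv, ?_⟩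
  rw [det_columnsCLM]
  calc _ = (1 - x 1 * k₁ (x 0) - x 2 * k₂ (x 0))
          * tripleProduct (w (x 0)) (u (x 0)) (v (x 0)) := by
        simp only [tripleProduct_apply, PiLp.add_apply, PiLp.sub_apply, PiLp.smul_apply,
          smul_eq_mul]
        ring
    _ = _ := by rw [hframe _ hxL, mul_one]

/-- The placement map is differentiable at almost every point of the
interior of `Ω`, and at such points its Jacobian determinant equals
`1 - ζ₁ k′(s) - ζ₂ k″(s)`. -/
theorem placement_jacobian_det
    (p L : ℝ) (hp : 1 < p) (hL : 0 < L)
    (k₁ k₂ ω : ℝ → ℝ)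
    (hk₁ : MemLp k₁ (ENNReal.ofReal p) (volume.restrict (Icc (0:ℝ) L)))
    (hk₂ : MemLp k₂ (ENNReal.ofReal p) (volume.restrict (Icc (0:ℝ) L)))
    (hω : MemLp ω (ENNReal.ofReal p) (volume.restrict (Icc (0:ℝ) L)))
    (rhat uhat vhat what : E3)
    (huhat : ‖uhat‖ = 1) (hvhat : ‖vhat‖ = 1) (huv : (inner ℝ uhat vhat : ℝ) = 0)
    (hwhat : what = cross3 uhat vhat)
    (u v w r : ℝ → E3)
    (hsol : RodSolution L k₁ k₂ ω rhat uhat vhat what u v w r)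
    -- the cross-sections and the reference configuration Ω
    (A : ℝ → Set (ℝ × ℝ)) (Ω : Set E3)
    (hΩ : Ω = {x : E3 | x 0 ∈ Icc (0:ℝ) L ∧ (x 1, x 2) ∈ A (x 0)})
    (hclos : ∃ U : Set E3, IsOpen U ∧ Ω = closure U)
    (R : ℝ) (hR : 0 < R) (hthin : ∀ x ∈ Ω, |x 1| < R ∧ |x 2| < R) :
    ∀ᵐ x ∂(volume.restrict (interior Ω)),
      ∃ Df : E3 →L[ℝ] E3,
        HasFDerivAt (placement r u v) Df x ∧
        LinearMap.det (Df : E3 →ₗ[ℝ] E3) = 1 - (x 1) * k₁ (x 0) - (x 2) * k₂ (x 0) :=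
  placement_jacobian_det_general L k₁ k₂ ω rhat uhat vhat what huhat hvhat huv hwhat u v w r hsol A
    Ω hΩ
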